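/- arXiv:2305.18443 — 2 statements merged into one kernel-verified Lean document; each statement's English description precedes it below -/
import Mathlib

section
/- Let e_t be a sequence satisfying e_τ ≤ 1/(√γ (τ+1+t₀)^ω) and e_t = (1-c_t)e_{t-1} + c_t/(t+t₀)^ω for t > τ, where c_t ∈ [σα_t M, 1] with α_t = h/(M(t+t₀)), ω ∈ (0,1], γ ∈ (0,1), t₀ ≥ 1, and σh(1-√γ) ≥ 1. Then e_t ≤ 1/(√γ (t+1+t₀)^ω) for all t ≥ τ. -/
theorem smr_induction_lemma (τ : ℕ) (e c : ℕ → ℝ) (ω γ t₀ σ h : ℝ) (M : ℕ) (hM : 1 ≤ M)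
    (hω : ω ∈ Set.Ioc (0:ℝ) 1) (hγ : γ ∈ Set.Ioo (0:ℝ) 1) (ht₀ : 1 ≤ t₀)
    (hσh : 1 ≤ σ * h * (1 - Real.sqrt γ))
    (hc : ∀ t : ℕ, c t ∈ Set.Icc (σ * (h / ((M : ℝ) * ((t : ℝ) + t₀))) * (M : ℝ)) 1)
    (hinit : e τ ≤ 1 / (Real.sqrt γ * ((τ : ℝ) + 1 + t₀) ^ ω))
    (hrec : ∀ t, τ < t → e t = (1 - c t) * e (t - 1) + c t / (((t : ℝ) + t₀) ^ ω)) :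
    ∀ t, τ ≤ t → e t ≤ 1 / (Real.sqrt γ * ((t : ℝ) + 1 + t₀) ^ ω) := by
  have hg0 : 0 < Real.sqrt γ := Real.sqrt_pos.mpr hγ.1
  have hg1 : Real.sqrt γ < 1 := by
    nlinarith [Real.sq_sqrt hγ.1.le, Real.sqrt_nonneg γ, hγ.2]
  set g := Real.sqrt γ with hgdef
  clear_value g
  intro t ht
  induction t, ht using Nat.le_induction with
  | base => exact hinit
  | succ n hn ih =>
    have hrec' := hrec (n+1) (Nat.lt_succ_of_le hn)
    have h0n : (0:ℝ) ≤ (n:ℝ) := Nat.cast_nonneg n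
    have hcast : ((n+1 : ℕ) : ℝ) = (n:ℝ) + 1 := by push_cast; ring
    rw [hcast] at hrec'
    simp only [Nat.add_sub_cancel] at hrec'
    have hcmem := hc (n+1)
    rw [hcast] at hcmem
    set x : ℝ := (n:ℝ) + 1 + t₀ with hxdef
    clear_value x
    have hx : 0 < x := by simp only [hxdef]; linarith
    have hx0 : x ≠ 0 := hx.ne'
    have hA : 0 < x ^ ω := Real.rpow_pos_of_pos hx ω
    have hB : 0 < (x+1) ^ ω := Real.rpow_pos_of_pos (by linarith) ω
    have hMpos : (0:ℝ) < (M:ℝ) := by exact_mod_cast Nat.lt_of_lt_of_le Nat.zero_lt_one hM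
    have hclo := hcmem.1
    have hchi := hcmem.2
    have heq : σ * (h / ((M:ℝ) * x)) * (M:ℝ) = σ * h / x := by
      field_simp
    rw [heq] at hclo
    -- from the lower bound on c and hσh : 1 ≤ σh(1-g)
    have hgle : 0 < 1 - g := by linarith
    have hclo2 : σ * h ≤ c (n+1) * x := by
      rw [div_le_iff₀ hx] at hclo; linarith
    have h1x : 1 ≤ c (n+1) * (1 - g) * x := by
      nlinarith [mul_le_mul_of_nonneg_right hclo2 hgle.le]
    -- power comparison
    have hd : 0 < x / (x+1) := div_pos hx (by linarith)
    have hd1 : x / (x+1) ≤ 1 := by rw [div_le_one (by linarith)]; linarith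
    have hpow := Real.rpow_le_rpow_of_exponent_ge hd hd1 hω.2
    rw [Real.rpow_one, Real.div_rpow hx.le (by linarith : (0:ℝ) ≤ x+1)] at hpow
    have hxy : x * (x+1)^ω ≤ x^ω * (x+1) := by
      rw [div_le_div_iff₀ (by linarith) hB] at hpow
      linarith
    have hmono : x^ω ≤ (x+1)^ω :=
      Real.rpow_le_rpow hx.le (by linarith) hω.1.le
    have key : (1 - c (n+1) * (1 - g)) * (x+1)^ω ≤ x^ω := by
      nlinarith [mul_le_mul_of_nonneg_right
        (show x - c (n+1) * (1-g) * x ≤ x - 1 by linarith) hB.le,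
        hxy, hmono, hx, hB.le, hA.le]
    have hclea : e (n+1) ≤ (1 - c (n+1) * (1 - g)) / (g * x^ω) := by
      rw [hrec']
      have h1 : (1 - c (n+1)) * e n ≤ (1 - c (n+1)) * (1/(g * x^ω)) :=
        mul_le_mul_of_nonneg_left ih (by linarith)
      have h2 : (1 - c (n+1)) * (1/(g * x^ω)) + c (n+1) / x^ω
          = (1 - c (n+1) * (1 - g)) / (g * x^ω) := by
        field_simp
        ring
      linarith
    have hfin : (1 - c (n+1) * (1 - g)) / (g * x^ω) ≤ 1 / (g * (x+1)^ω) := by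
      rw [div_le_div_iff₀ (mul_pos hg0 hA) (mul_pos hg0 hB)]
      have hk2 : g * ((1 - c (n+1) * (1 - g)) * (x+1)^ω) ≤ g * x^ω :=
        mul_le_mul_of_nonneg_left key hg0.le
      linarith [hk2]
    have hgoal : ((n+1:ℕ):ℝ) + 1 + t₀ = x + 1 := by rw [hxdef]; push_cast; ring
    rw [hgoal]
    linarith
end

section
/- For a sequence a_t satisfying a_{t+1} ≤ ((τ+t₀)/(t+1+t₀))^{σh} a_τ + C_φ/(t+1+t₀) + √γ C'/(t+1+t₀) + √γ C/√(t+1+t₀) + C_ε/√(t+1+t₀) for all τ ≤ t, where σh ≥ 1, C_ε ≤ (1-√γ)C, C_φ ≤ ((1-√γ)/2)C', and a_τ(τ+t₀) ≤ ((1-√γ)/2)C', it holds that a_t ≤ C/√(t+t₀) + C'/(t+t₀) for all t ≥ τ, provided a_τ ≤ C'/(τ+t₀). -/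
theorem smr_main_induction (a : ℕ → ℝ) (τ : ℕ)
    (σ h t₀ γ C C' Cφ Cε : ℝ)
    (ht₀ : 0 < t₀) (hγ : γ ∈ Set.Ioo (0:ℝ) 1)
    (hC : 0 ≤ C) (hC' : 0 ≤ C') (hCφ : 0 ≤ Cφ) (hCε : 0 ≤ Cε)
    (hσh : 1 ≤ σ * h)
    (hCεC : Cε ≤ (1 - Real.sqrt γ) * C)
    (hCφC' : Cφ ≤ (1 - Real.sqrt γ) / 2 * C')
    (hinitC' : a τ * ((τ : ℝ) + t₀) ≤ (1 - Real.sqrt γ) / 2 * C')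
    (hinit : a τ ≤ C' / ((τ : ℝ) + t₀))
    (hrec : ∀ t : ℕ, τ ≤ t →
      a (t + 1) ≤ (((τ : ℝ) + t₀) / ((t : ℝ) + 1 + t₀)) ^ (σ * h) * a τ +
        Cφ / ((t : ℝ) + 1 + t₀) +
        Real.sqrt γ * (C' / ((t : ℝ) + 1 + t₀)) +
        Real.sqrt γ * (C / Real.sqrt ((t : ℝ) + 1 + t₀)) +
        Cε / Real.sqrt ((t : ℝ) + 1 + t₀)) :
    ∀ t : ℕ, τ ≤ t →
      a t ≤ C / Real.sqrt ((t : ℝ) + t₀) + C' / ((t : ℝ) + t₀) := by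
  set g := Real.sqrt γ with hgdef
  have hg0 : 0 ≤ g := Real.sqrt_nonneg γ
  have hg1 : g ≤ 1 := by
    rw [hgdef, show (1:ℝ) = Real.sqrt 1 by simp]
    exact Real.sqrt_le_sqrt hγ.2.le
  intro t ht
  rcases eq_or_lt_of_le ht with h1 | h1
  · subst h1
    have hpos : 0 < (τ : ℝ) + t₀ := by positivity
    have : 0 ≤ C / Real.sqrt ((τ : ℝ) + t₀) := by positivity
    linarith
  · obtain ⟨s, rfl⟩ : ∃ s, t = s + 1 := ⟨t - 1, by omega⟩
    have hτs : τ ≤ s := by omega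
    have hS : (0:ℝ) < (s : ℝ) + 1 + t₀ := by positivity
    set S : ℝ := (s : ℝ) + 1 + t₀ with hSdef
    have hτt : (τ : ℝ) + t₀ ≤ S := by
      have : (τ : ℝ) ≤ s := by exact_mod_cast hτs
      simp only [hSdef]; linarith
    have hτpos : (0:ℝ) < (τ : ℝ) + t₀ := by positivity
    have hx0 : 0 < ((τ : ℝ) + t₀) / S := by positivity
    have hx1 : ((τ : ℝ) + t₀) / S ≤ 1 := (div_le_one hS).mpr hτt
    have hrpow : (((τ : ℝ) + t₀) / S) ^ (σ * h) ≤ (((τ : ℝ) + t₀) / S) ^ (1:ℝ) :=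
      Real.rpow_le_rpow_of_exponent_ge hx0 hx1 hσh
    rw [Real.rpow_one] at hrpow
    have hsS : 0 < Real.sqrt S := Real.sqrt_pos.mpr hS
    -- bound the first term
    have hT1 : (((τ : ℝ) + t₀) / S) ^ (σ * h) * a τ ≤ ((1 - g) / 2 * C') / S := by
      rcases le_or_gt 0 (a τ) with haτ | haτ
      · have h1 : (((τ : ℝ) + t₀) / S) ^ (σ * h) * a τ ≤ (((τ : ℝ) + t₀) / S) * a τ :=
          mul_le_mul_of_nonneg_right hrpow haτ
        have h2 : (((τ : ℝ) + t₀) / S) * a τ = (a τ * ((τ : ℝ) + t₀)) / S := by ring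
        have h3 : (a τ * ((τ : ℝ) + t₀)) / S ≤ ((1 - g) / 2 * C') / S :=
          div_le_div_of_nonneg_right hinitC' hS.le
        linarith
      · have hp : 0 < (((τ : ℝ) + t₀) / S) ^ (σ * h) := Real.rpow_pos_of_pos hx0 _
        have : (((τ : ℝ) + t₀) / S) ^ (σ * h) * a τ ≤ 0 :=
          mul_nonpos_of_nonneg_of_nonpos hp.le haτ.le
        have h4 : 0 ≤ ((1 - g) / 2 * C') / S :=
          div_nonneg (by nlinarith) hS.le
        linarith
    have hT2 : Cφ / S ≤ ((1 - g) / 2 * C') / S :=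
      div_le_div_of_nonneg_right hCφC' hS.le
    have hT5 : Cε / Real.sqrt S ≤ ((1 - g) * C) / Real.sqrt S :=
      div_le_div_of_nonneg_right hCεC hsS.le
    have hR := hrec s hτs
    have hkey : ((1 - g) / 2 * C') / S + ((1 - g) / 2 * C') / S + g * (C' / S) +
        g * (C / Real.sqrt S) + ((1 - g) * C) / Real.sqrt S
        = C / Real.sqrt S + C' / S := by
      field_simp
      ring
    have hgoalcast : ((s + 1 : ℕ) : ℝ) + t₀ = S := by push_cast [hSdef]; ring
    rw [hgoalcast]
    have hRS : a (s + 1) ≤ (((τ : ℝ) + t₀) / S) ^ (σ * h) * a τ + Cφ / S +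
        g * (C' / S) + g * (C / Real.sqrt S) + Cε / Real.sqrt S := hR
    linarith
end
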